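/- Let 𝐢 be a reduced word for w₀ in S_{n+1} that is i-semi-adapted, with data η_1, …, η_k and ν_1, …, ν_k. Then every sequence of braid moves allowed by the definition of i-semi-adaptedness taking 𝐢 to a word whose first letter is i contains exactly k 3-term braid moves, and for each 1 ≤ m ≤ k the m-th 3-term braid move (in order of application) occurs at a position where the three consecutive induced roots of the current word are (η_{k+1−m}, ν_{k+1−m}, α_i); that is, the 3-term braid moves occur at the root triples (η_k, ν_k, α_i), then (η_{k−1}, ν_{k−1}, α_i), …, then (η_1, ν_1, α_i). -/

import Mathlib

open scoped Classical

noncomputable section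

/-- Standard basis vector `e i` (1-based coordinates, ambient `ℤ^(n+1)` sits inside `ℕ → ℤ`). -/
def stdE (i : ℕ) : ℕ → ℤ := fun j => if j = i then 1 else 0

/-- Type `A_n` simple root `α_i = e_i - e_(i+1)`. -/
def alphaA (i : ℕ) : ℕ → ℤ := stdE i - stdE (i+1)

/-- Positive root `α_(i,j) = α_i + ⋯ + α_j = e_i - e_(j+1)`. -/
def rootA (i j : ℕ) : ℕ → ℤ := stdE i - stdE (j+1)

/-- `β` is a positive root of type `A_n`. -/
def PosRootA (n : ℕ) (β : ℕ → ℤ) : Prop :=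
  ∃ i j, 1 ≤ i ∧ i ≤ j ∧ j ≤ n ∧ β = rootA i j

/-- Simple transposition `s_i = (i, i+1)`. -/
def sA (i : ℕ) : Equiv.Perm ℕ := Equiv.swap i (i+1)

/-- Product `s_(i₁) ⋯ s_(i_N)` of the simple transpositions of a word. -/
def wordProdA (w : List ℕ) : Equiv.Perm ℕ := (w.map sA).prod

/-- The reversal permutation `w₀ : k ↦ n+2-k` of `{1,…,n+1}`. -/
def w0A (n : ℕ) : Equiv.Perm ℕ :=
  Function.Involutive.toPerm (fun k => if 1 ≤ k ∧ k ≤ n+1 then n+2-k else k)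
    (by intro k; dsimp only; split_ifs <;> omega)

/-- A permutation of coordinate indices acts on vectors by permuting coordinates. -/
def permAct (σ : Equiv.Perm ℕ) (v : ℕ → ℤ) : ℕ → ℤ := fun j => v (σ⁻¹ j)

/-- The induced root sequence `β_k = s_(i₁)⋯s_(i_(k-1)) (α_(i_k))` of a word (0-indexed). -/
def rootSeqA (w : List ℕ) : List (ℕ → ℤ) :=
  (List.range w.length).map fun k => permAct (wordProdA (w.take k)) (alphaA (w.getD k 0))

/-- The word `𝐢^A = (1,2,…,n)(1,2,…,n-1)⋯(1,2)(1)`. -/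
def wordA (n : ℕ) : List ℕ :=
  ((List.range n).reverse).flatMap fun m => (List.range (m+1)).map (· + 1)

/-- `w` is a reduced word for the longest element `w₀` of `S_(n+1)`. -/
def isReducedWordA (n : ℕ) (w : List ℕ) : Prop :=
  (∀ i ∈ w, 1 ≤ i ∧ i ≤ n) ∧ w.length = n * (n+1) / 2 ∧ wordProdA w = w0A n

/-- Standard inner product on `ℤ^(n+1)` (coordinates `1,…,n+1`; index `0` unused). -/
def ipA (n : ℕ) (v u : ℕ → ℤ) : ℤ := ∑ j ∈ Finset.range (n+2), v j * u j

/-- A braid move: `two k` interchanges the letters at positions `k, k+1`;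
`three k` replaces the letters `(a, b, a)` at positions `k, k+1, k+2` by `(b, a, b)`. -/
inductive BraidMove where
  | two (k : ℕ)
  | three (k : ℕ)

/-- The effect of a braid move on a word. -/
def moveWord (w : List ℕ) : BraidMove → List ℕ
  | .two k => (w.set k (w.getD (k+1) 0)).set (k+1) (w.getD k 0)
  | .three k => ((w.set k (w.getD (k+1) 0)).set (k+1) (w.getD k 0)).set (k+2) (w.getD (k+1) 0)

/-- Validity of a braid move on a word, in type `A`: a 2-term move needs letters at distance
`≥ 2`, a 3-term move needs the pattern `(a, b, a)` with `|a - b| = 1`. -/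
def moveOKA (w : List ℕ) : BraidMove → Prop
  | .two k => k + 1 < w.length ∧
      (w.getD k 0 + 2 ≤ w.getD (k+1) 0 ∨ w.getD (k+1) 0 + 2 ≤ w.getD k 0)
  | .three k => k + 2 < w.length ∧ w.getD (k+2) 0 = w.getD k 0 ∧
      (w.getD k 0 + 1 = w.getD (k+1) 0 ∨ w.getD (k+1) 0 + 1 = w.getD k 0)

/-- The semi-adaptedness condition for the letter `i`: any 3-term braid move must be applied
where the three consecutive induced roots are `(β, β + α_i, α_i)`. -/
def semiCondA (i : ℕ) (w : List ℕ) : BraidMove → Prop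
  | .two _ => True
  | .three k =>
      (rootSeqA w).getD (k+1) 0 = (rootSeqA w).getD k 0 + alphaA i ∧
      (rootSeqA w).getD (k+2) 0 = alphaA i

/-- Validity of a sequence of braid moves, each allowed by `i`-semi-adaptedness. -/
def validSeqA (i : ℕ) : List ℕ → List BraidMove → Prop
  | _, [] => True
  | w, m :: σ => moveOKA w m ∧ semiCondA i w m ∧ validSeqA i (moveWord w m) σ

/-- The word obtained by applying a sequence of braid moves. -/
def applyMovesWord (w : List ℕ) (σ : List BraidMove) : List ℕ := σ.foldl moveWord w

/-- `w` is `i`-semi-adapted: some sequence of braid moves allowed by `i`-semi-adaptedness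
takes `w` to a word whose first letter is `i`. -/
def SemiAdaptedA (i : ℕ) (w : List ℕ) : Prop :=
  ∃ σ : List BraidMove, validSeqA i w σ ∧ (applyMovesWord w σ).getD 0 0 = i

/-- The effect of a braid move on Lusztig data (tuples, recorded as lists of naturals):
a 2-term move keeps entries attached to their roots; a 3-term move applies Lusztig's
piecewise-linear map `(c₁,c₂,c₃) ↦ (max(c₂,c₁+c₂-c₃), min(c₁,c₃), max(c₂,c₂+c₃-c₁))`. -/
def moveData (c : List ℕ) : BraidMove → List ℕ
  | .two k => (c.set k (c.getD (k+1) 0)).set (k+1) (c.getD k 0)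
  | .three k =>
      ((c.set k (max (c.getD (k+1) 0) (c.getD k 0 + c.getD (k+1) 0 - c.getD (k+2) 0))).set
          (k+1) (min (c.getD k 0) (c.getD (k+2) 0))).set
          (k+2) (max (c.getD (k+1) 0) (c.getD (k+1) 0 + c.getD (k+2) 0 - c.getD k 0))

/-- The composite transition map `R_σ` on Lusztig data for a sequence `σ` of braid moves. -/
def Rdata (σ : List BraidMove) (c : List ℕ) : List ℕ := σ.foldl moveData c

/-- The inverse `R_σ⁻¹`: since each single-move transition map is an involution, the inverse
of `R_σ` applies the single-move maps in the reverse order. -/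
def RdataInv (σ : List BraidMove) (c : List ℕ) : List ℕ := σ.reverse.foldl moveData c

/-- One step of bracket cancellation, on labeled brackets (`true` = '(' , `false` = ')').
The state is `(labels of uncanceled ')', stack of currently open '(')`. -/
def brStep {α : Type*} (st : List α × List α) (x : Bool × α) : List α × List α :=
  match x with
  | (true, lab) => (st.1, lab :: st.2)
  | (false, lab) =>
    match st.2 with
    | [] => (lab :: st.1, [])
    | _ :: rest => (st.1, rest)

/-- Sequentially cancel adjacent `()` pairs in a labeled bracket string; returns the labels
of the uncanceled ')'s (head = rightmost) and of the uncanceled '('s (head = rightmost). -/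
def brReduce {α : Type*} (l : List (Bool × α)) : List α × List α := l.foldl brStep ([], [])

/-- The label of the leftmost uncanceled '(' in a labeled bracket string, if any. -/
def brLeftOpen {α : Type*} (l : List (Bool × α)) : Option α := (brReduce l).2.getLast?

/-- The label of the rightmost uncanceled ')' in a labeled bracket string, if any. -/
def brRightClose {α : Type*} (l : List (Bool × α)) : Option α := (brReduce l).1.head?

/-- The roots `η₁, …, η_k`: those prior to `α_i` in the induced order of `w` with
`(α_i | η) < 0`, in order (as a 0-indexed list). -/
def etaListA (n i : ℕ) (w : List ℕ) : List (ℕ → ℤ) :=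
  ((rootSeqA w).takeWhile fun β => decide (β ≠ alphaA i)).filter
    fun η => decide (ipA n (alphaA i) η < 0)

/-- The bracket string `S_i^𝐢(𝐜)`: for each `j`, `c_(ν_(j+1))` ')'s labeled `j` followed by
`c_(η_(j+1))` '('s labeled `j`, and finally `c_(α_i)` ')'s labeled `k`. Here `ν = η + α_i`. -/
def brStringA (n i : ℕ) (w : List ℕ) (c : (ℕ → ℤ) → ℕ) : List (Bool × ℕ) :=
  ((List.range (etaListA n i w).length).flatMap fun j =>
    List.replicate (c ((etaListA n i w).getD j 0 + alphaA i)) (false, j) ++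
    List.replicate (c ((etaListA n i w).getD j 0)) (true, j)) ++
  List.replicate (c (alphaA i)) (false, (etaListA n i w).length)

/-- Lusztig data of a Kostant partition `𝐜` with respect to the word `w`: the values of `𝐜`
read along the induced root order of `w`. -/
def lusDataA (w : List ℕ) (c : (ℕ → ℤ) → ℕ) : List ℕ := (rootSeqA w).map c

/-- Add `1` to the entry in position 1 of a Lusztig datum. -/
def inc1 (c : List ℕ) : List ℕ := c.set 0 (c.getD 0 0 + 1)

/-- Subtract `1` from the entry in position 1 of a Lusztig datum. -/
def dec1 (c : List ℕ) : List ℕ := c.set 0 (c.getD 0 0 - 1)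

/-- The list of root triples `(β_k, β_(k+1), β_(k+2))` (for the word current at the time of
application) at which the 3-term braid moves of a move sequence are applied, in order. -/
def threeTriplesA : List ℕ → List BraidMove → List ((ℕ → ℤ) × (ℕ → ℤ) × (ℕ → ℤ))
  | _, [] => []
  | w, BraidMove.two k :: σ => threeTriplesA (moveWord w (.two k)) σ
  | w, BraidMove.three k :: σ =>
      ((rootSeqA w).getD k 0, (rootSeqA w).getD (k+1) 0, (rootSeqA w).getD (k+2) 0) ::
        threeTriplesA (moveWord w (.three k)) σ

/-! Along a reduced word for `w₀` each letter adds at most one inversion and `w₀` has `N` of them,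
so each letter adds exactly one: the induced order lists every positive root `e_x - e_y` once and
is a reflection order (`e_x - e_z` lies between `e_x - e_y` and `e_y - e_z`).

An allowed 3-term move reverses `(β, β + α_i, α_i)`; here `β` is an `η` and `β + α_i` is not, so
the move removes the last `η` in front of `α_i`. A 2-term move swaps two orthogonal neighbours,
which leaves the list of `η`s unchanged unless they are `η`s `e_a - e_i` and `e_(i+1) - e_b` in
front of `α_i`. In that case the reflection order places `e_a - e_b` between `e_a - e_i` and
`e_a - e_(i+1)`, a configuration that no allowed move destroys and that keeps `α_i` away from the
front. Induction on the move sequence gives the theorem. -/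

lemma sA_mul_comm {a b : ℕ} (h : a + 2 ≤ b ∨ b + 2 ≤ a) : sA a * sA b = sA b * sA a := by
  ext x
  simp only [sA, Equiv.Perm.mul_apply, Equiv.swap_apply_def]
  split_ifs <;> omega

lemma sA_braid_succ (a : ℕ) : sA a * sA (a + 1) * sA a = sA (a + 1) * sA a * sA (a + 1) := by
  ext x
  simp only [sA, Equiv.Perm.mul_apply, Equiv.swap_apply_def]
  split_ifs <;> omega

lemma sA_braid {a b : ℕ} (h : a + 1 = b ∨ b + 1 = a) :
    sA a * sA b * sA a = sA b * sA a * sA b := by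
  rcases h with rfl | rfl
  exacts [sA_braid_succ a, (sA_braid_succ b).symm]

lemma sA_apply_of_ne {a x : ℕ} (h₁ : x ≠ a) (h₂ : x ≠ a + 1) : sA a x = x :=
  Equiv.swap_apply_of_ne_of_ne h₁ h₂

lemma wordProdA_append (v w : List ℕ) : wordProdA (v ++ w) = wordProdA v * wordProdA w := by
  simp [wordProdA]

lemma wordProdA_cons (a : ℕ) (w : List ℕ) : wordProdA (a :: w) = sA a * wordProdA w := by
  simp [wordProdA]

def posPairs (n : ℕ) : Finset (ℕ × ℕ) :=
  (Finset.Icc 1 (n + 1) ×ˢ Finset.Icc 1 (n + 1)).filter fun p => p.1 < p.2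

lemma mem_posPairs {n : ℕ} {p : ℕ × ℕ} : p ∈ posPairs n ↔ 1 ≤ p.1 ∧ p.1 < p.2 ∧ p.2 ≤ n + 1 := by
  simp only [posPairs, Finset.mem_filter, Finset.mem_product, Finset.mem_Icc]
  omega

lemma card_posPairs (n : ℕ) : (posPairs n).card = n * (n + 1) / 2 := by
  induction n with
  | zero => simp [posPairs]
  | succ n ih =>
    have hsplit : posPairs (n + 1) = posPairs n ∪ (Finset.Icc 1 (n + 1)).image (·, n + 2) := by
      ext ⟨x, y⟩
      simp only [mem_posPairs, Finset.mem_union, Finset.mem_image, Finset.mem_Icc]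
      constructor
      · intro h
        by_cases hy : y ≤ n + 1
        · exact Or.inl ⟨h.1, h.2.1, hy⟩
        · exact Or.inr ⟨x, ⟨h.1, by omega⟩, by simp; omega⟩
      · rintro (h | ⟨z, hz, hzy⟩)
        · omega
        · simp only [Prod.mk.injEq] at hzy
          omega
    have hdisj : Disjoint (posPairs n) ((Finset.Icc 1 (n + 1)).image (·, n + 2)) := by
      simp only [Finset.disjoint_left, Finset.mem_image, Finset.mem_Icc, mem_posPairs]
      rintro _ hp ⟨z, -, rfl⟩
      simp only at hp
      omega
    rw [hsplit, Finset.card_union_of_disjoint hdisj, ih,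
      Finset.card_image_of_injective _ fun x y h => congrArg Prod.fst h, Nat.card_Icc,
      show (n + 1) * (n + 1 + 1) = n * (n + 1) + 2 * (n + 1) by ring,
      Nat.add_mul_div_left _ _ two_pos]
    omega

def invSet (n : ℕ) (u : Equiv.Perm ℕ) : Finset (ℕ × ℕ) :=
  (posPairs n).filter fun p => u⁻¹ p.2 < u⁻¹ p.1

lemma mem_invSet {n : ℕ} {u : Equiv.Perm ℕ} {p : ℕ × ℕ} :
    p ∈ invSet n u ↔ p ∈ posPairs n ∧ u⁻¹ p.2 < u⁻¹ p.1 :=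
  Finset.mem_filter

lemma invSet_one (n : ℕ) : invSet n 1 = ∅ := by
  ext p
  simp only [mem_invSet, inv_one, Equiv.Perm.one_apply, Finset.notMem_empty, iff_false]
  exact fun h => (mem_posPairs.1 h.1).2.1.not_gt h.2

lemma invSet_w0A (n : ℕ) : invSet n (w0A n) = posPairs n := by
  ext p
  have hinv : (w0A n)⁻¹ = w0A n := by
    ext x
    rw [Equiv.Perm.inv_eq_iff_eq]
    simp only [w0A, Function.Involutive.toPerm, Equiv.coe_fn_mk]
    split_ifs <;> omega
  simp only [mem_invSet, and_iff_left_iff_imp, mem_posPairs, hinv]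
  intro hp
  simp only [w0A, Function.Involutive.toPerm, Equiv.coe_fn_mk]
  split_ifs <;> omega

lemma invSet_mul_sA_subset (n : ℕ) (u : Equiv.Perm ℕ) (a : ℕ) :
    invSet n (u * sA a) ⊆ insert (u a, u (a + 1)) (invSet n u) := by
  intro p hp
  rw [mem_invSet, mul_inv_rev] at hp
  obtain ⟨hp, hlt⟩ := hp
  rw [Finset.mem_insert, mem_invSet]
  by_cases hinv : u⁻¹ p.2 < u⁻¹ p.1
  · exact Or.inr ⟨hp, hinv⟩
  have h : u⁻¹ p.1 = a ∧ u⁻¹ p.2 = a + 1 := by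
    simp only [Equiv.Perm.mul_apply, sA, Equiv.swap_inv, Equiv.swap_apply_def] at hlt
    split_ifs at hlt <;> omega
  obtain ⟨h1, h2⟩ := h
  left
  rw [← h2, ← h1]
  simp

lemma mem_invSet_of_mem_of_mem {n : ℕ} {u : Equiv.Perm ℕ} {x y z : ℕ}
    (hxy : (x, y) ∈ invSet n u) (hyz : (y, z) ∈ invSet n u) (hxz : (x, z) ∈ posPairs n) :
    (x, z) ∈ invSet n u :=
  mem_invSet.2 ⟨hxz, (mem_invSet.1 hyz).2.trans (mem_invSet.1 hxy).2⟩

lemma mem_invSet_or_mem_invSet {n : ℕ} {u : Equiv.Perm ℕ} {x y z : ℕ}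
    (hxz : (x, z) ∈ invSet n u) (hxy : (x, y) ∈ posPairs n) (hyz : (y, z) ∈ posPairs n) :
    (x, y) ∈ invSet n u ∨ (y, z) ∈ invSet n u := by
  simp only [mem_invSet, hxy, hyz, true_and] at hxz ⊢
  by_contra! h
  exact absurd hxz.2 (not_lt.2 (h.1.trans h.2))

/-- `rootPair w k = (x, y)` when the `k`-th induced root of `w` (counting from `0`) is
`e_x - e_y`. -/
def rootPair (w : List ℕ) (k : ℕ) : ℕ × ℕ :=
  (wordProdA (w.take k) (w.getD k 0), wordProdA (w.take k) (w.getD k 0 + 1))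

lemma wordProdA_take_succ {w : List ℕ} {k : ℕ} (hk : k < w.length) :
    wordProdA (w.take (k + 1)) = wordProdA (w.take k) * sA (w.getD k 0) := by
  rw [List.take_add_one, List.getElem?_eq_getElem hk, wordProdA_append,
    List.getD_eq_getElem _ _ hk]
  simp [wordProdA]

lemma eq_self_of_le_add_one {f : ℕ → ℕ} {L : ℕ} (h0 : f 0 = 0)
    (hstep : ∀ k < L, f (k + 1) ≤ f k + 1) (hL : f L = L) {k : ℕ} (hk : k ≤ L) : f k = k := by
  have hle : ∀ k ≤ L, f k ≤ k := by
    intro k hk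
    induction k with
    | zero => omega
    | succ k ih => have := hstep k (by omega); have := ih (by omega); omega
  have hgrowth : ∀ j, k + j ≤ L → f (k + j) ≤ f k + j := by
    intro j hj
    induction j with
    | zero => rfl
    | succ j ih =>
      rw [← Nat.add_assoc]
      have := hstep (k + j) (by omega); have := ih (by omega); omega
  have := hgrowth (L - k) (by omega)
  rw [Nat.add_sub_cancel' hk, hL] at this
  have := hle k hk
  omega

lemma card_invSet_take {n : ℕ} {w : List ℕ} (hw : isReducedWordA n w) {k : ℕ}
    (hk : k ≤ w.length) : (invSet n (wordProdA (w.take k))).card = k := by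
  refine eq_self_of_le_add_one (f := fun k => (invSet n (wordProdA (w.take k))).card)
    (by simp [wordProdA, invSet_one]) (fun k hk => ?_) ?_ hk
  · rw [wordProdA_take_succ hk]
    exact (Finset.card_le_card (invSet_mul_sA_subset n _ _)).trans (Finset.card_insert_le _ _)
  · rw [List.take_length, hw.2.2, invSet_w0A, card_posPairs, hw.2.1]

lemma invSet_take_succ {n : ℕ} {w : List ℕ} (hw : isReducedWordA n w) {k : ℕ}
    (hk : k < w.length) :
    invSet n (wordProdA (w.take (k + 1))) =
        insert (rootPair w k) (invSet n (wordProdA (w.take k))) ∧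
      rootPair w k ∉ invSet n (wordProdA (w.take k)) := by
  have hsub : invSet n (wordProdA (w.take (k + 1))) ⊆
      insert (rootPair w k) (invSet n (wordProdA (w.take k))) := by
    rw [wordProdA_take_succ hk]
    exact invSet_mul_sA_subset n _ _
  have hcard := card_invSet_take hw hk.le
  have hcard' := card_invSet_take hw (show k + 1 ≤ w.length from hk)
  have hins := Finset.card_insert_le (rootPair w k) (invSet n (wordProdA (w.take k)))
  refine ⟨Finset.eq_of_subset_of_card_le hsub (by omega), fun hmem => ?_⟩
  rw [Finset.insert_eq_of_mem hmem] at hsub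
  have := Finset.card_le_card hsub
  omega

lemma invSet_take {n : ℕ} {w : List ℕ} (hw : isReducedWordA n w) {k : ℕ} (hk : k ≤ w.length) :
    invSet n (wordProdA (w.take k)) = (Finset.range k).image (rootPair w) := by
  induction k with
  | zero => simp [wordProdA, invSet_one]
  | succ k ih =>
    rw [(invSet_take_succ hw hk).1, ih (by omega), Finset.range_add_one, Finset.image_insert]

lemma rootPair_mem_posPairs {n : ℕ} {w : List ℕ} (hw : isReducedWordA n w) {k : ℕ}
    (hk : k < w.length) : rootPair w k ∈ posPairs n := by
  have hmem : rootPair w k ∈ invSet n (wordProdA (w.take (k + 1))) := by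
    rw [(invSet_take_succ hw hk).1]
    exact Finset.mem_insert_self _ _
  exact (mem_invSet.1 hmem).1

lemma rootPair_fst_lt_snd {n : ℕ} {w : List ℕ} (hw : isReducedWordA n w) {k : ℕ}
    (hk : k < w.length) : (rootPair w k).1 < (rootPair w k).2 :=
  (mem_posPairs.1 (rootPair_mem_posPairs hw hk)).2.1

lemma rootPair_mem_invSet_take_iff {n : ℕ} {w : List ℕ} (hw : isReducedWordA n w) {k t : ℕ}
    (hk : k < w.length) (ht : t ≤ w.length) :
    rootPair w k ∈ invSet n (wordProdA (w.take t)) ↔ k < t := by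
  rw [invSet_take hw ht, Finset.mem_image]
  refine ⟨fun ⟨j, hj, hjk⟩ => ?_, fun h => ⟨k, Finset.mem_range.2 h, rfl⟩⟩
  by_contra hkt
  have hmem : rootPair w k ∈ invSet n (wordProdA (w.take k)) := by
    rw [invSet_take hw hk.le, ← hjk]
    exact Finset.mem_image_of_mem _ (Finset.mem_range.2 (by rw [Finset.mem_range] at hj; omega))
  exact (invSet_take_succ hw hk).2 hmem

lemma rootPair_injOn {n : ℕ} {w : List ℕ} (hw : isReducedWordA n w) :
    Set.InjOn (rootPair w) (Set.Iio w.length) := by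
  have key : ∀ j k, k < w.length → j < k → rootPair w j ≠ rootPair w k := fun j k hk hjk h =>
    (invSet_take_succ hw hk).2 (h ▸ (rootPair_mem_invSet_take_iff hw (hjk.trans hk) hk.le).2 hjk)
  intro j hj k hk h
  rcases lt_trichotomy j k with hjk | rfl | hjk
  exacts [absurd h (key j k hk hjk), rfl, absurd h.symm (key k j hj hjk)]

lemma exists_rootPair_eq {n : ℕ} {w : List ℕ} (hw : isReducedWordA n w) {p : ℕ × ℕ}
    (hp : p ∈ posPairs n) : ∃ k < w.length, rootPair w k = p := by
  rw [← invSet_w0A, ← hw.2.2, ← List.take_length (l := w), invSet_take hw le_rfl,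
    Finset.mem_image] at hp
  obtain ⟨k, hk, rfl⟩ := hp
  exact ⟨k, Finset.mem_range.1 hk, rfl⟩

lemma rootPair_between {n : ℕ} {w : List ℕ} (hw : isReducedWordA n w) {x y z k₁ k₂ k₃ : ℕ}
    (hk₁ : k₁ < w.length) (hk₂ : k₂ < w.length) (hk₃ : k₃ < w.length)
    (h₁ : rootPair w k₁ = (x, y)) (h₂ : rootPair w k₂ = (y, z)) (h₃ : rootPair w k₃ = (x, z)) :
    min k₁ k₂ < k₃ ∧ k₃ < max k₁ k₂ := by
  have hxy := rootPair_mem_posPairs hw hk₁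
  have hyz := rootPair_mem_posPairs hw hk₂
  have hxz := rootPair_mem_posPairs hw hk₃
  rw [h₁] at hxy; rw [h₂] at hyz; rw [h₃] at hxz
  have hmem : ∀ {k t}, k < w.length → t ≤ w.length →
      (rootPair w k ∈ invSet n (wordProdA (w.take t)) ↔ k < t) :=
    rootPair_mem_invSet_take_iff hw
  have hne₁ : k₁ ≠ k₃ := fun h => by
    rw [h, h₃, Prod.mk.injEq] at h₁; rw [mem_posPairs] at hyz; omega
  have hne₂ : k₂ ≠ k₃ := fun h => by
    rw [h, h₃, Prod.mk.injEq] at h₂; rw [mem_posPairs] at hxy; omega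
  constructor
  · have hxz' := (hmem hk₃ (show k₃ + 1 ≤ w.length from hk₃)).2 (Nat.lt_succ_self _)
    rw [h₃] at hxz'
    rcases mem_invSet_or_mem_invSet hxz' hxy hyz with h | h
    · rw [← h₁, hmem hk₁ (show k₃ + 1 ≤ w.length from hk₃)] at h; omega
    · rw [← h₂, hmem hk₂ (show k₃ + 1 ≤ w.length from hk₃)] at h; omega
  · by_contra! h
    have hxy' := (hmem hk₁ hk₃.le).2 (by omega)
    have hyz' := (hmem hk₂ hk₃.le).2 (by omega)
    rw [h₁] at hxy'; rw [h₂] at hyz'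
    have hxz' := mem_invSet_of_mem_of_mem hxy' hyz' hxz
    rw [← h₃, hmem hk₃ hk₃.le] at hxz'
    exact lt_irrefl _ hxz'

def pairRoot (p : ℕ × ℕ) : ℕ → ℤ := stdE p.1 - stdE p.2

lemma pairRoot_apply (p : ℕ × ℕ) (j : ℕ) :
    pairRoot p j = (if j = p.1 then 1 else 0) - (if j = p.2 then 1 else 0) := rfl

lemma alphaA_eq_pairRoot (i : ℕ) : alphaA i = pairRoot (i, i + 1) := rfl

lemma pairRoot_eq_iff {p q : ℕ × ℕ} (hp : p.1 ≠ p.2) :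
    pairRoot p = pairRoot q ↔ p = q := by
  refine ⟨fun h => ?_, congrArg pairRoot⟩
  have h₁ := congrFun h p.1
  have h₂ := congrFun h p.2
  simp only [pairRoot_apply] at h₁ h₂
  ext <;> split_ifs at h₁ h₂ <;> omega

lemma rootSeqA_eq_map (w : List ℕ) :
    rootSeqA w = (List.range w.length).map (pairRoot ∘ rootPair w) := by
  refine List.map_congr_left fun k _ => funext fun j => ?_
  simp only [permAct, alphaA, stdE, pairRoot, rootPair, Function.comp_apply, Pi.sub_apply,
    Equiv.Perm.inv_eq_iff_eq]

lemma rootSeqA_getD {w : List ℕ} {k : ℕ} (hk : k < w.length) :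
    (rootSeqA w).getD k 0 = pairRoot (rootPair w k) := by
  simp [rootSeqA_eq_map, List.getD_eq_getElem?_getD, hk]

lemma rootPair_zero (w : List ℕ) : rootPair w 0 = (w.getD 0 0, w.getD 0 0 + 1) := rfl

lemma rootPair_append_of_lt (A B : List ℕ) {j : ℕ} (hj : j < A.length) :
    rootPair (A ++ B) j = rootPair A j := by
  simp [rootPair, List.take_append, List.getD_eq_getElem?_getD, List.getElem?_append_left hj,
    Nat.sub_eq_zero_of_le hj.le]

lemma rootPair_append_add (A B : List ℕ) (j : ℕ) :
    rootPair (A ++ B) (A.length + j) = Prod.map (wordProdA A) (wordProdA A) (rootPair B j) := by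
  simp [rootPair, List.take_append, wordProdA_append, List.getD_eq_getElem?_getD,
    List.getElem?_append_right, List.take_of_length_le]

lemma rootPair_cons_succ (a : ℕ) (w : List ℕ) (j : ℕ) :
    rootPair (a :: w) (j + 1) = Prod.map (sA a) (sA a) (rootPair w j) := by
  rw [← List.singleton_append, add_comm, ← List.length_singleton (a := a), rootPair_append_add]
  simp [wordProdA]

lemma rootPair_append_swap {A B B' : List ℕ} {x y : ℕ}
    (h : ∀ j, rootPair B' j = rootPair B (Equiv.swap x y j)) (j : ℕ) :
    rootPair (A ++ B') j = rootPair (A ++ B) (Equiv.swap (A.length + x) (A.length + y) j) := by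
  rcases lt_or_ge j A.length with hj | hj
  · rw [Equiv.swap_apply_of_ne_of_ne (by omega) (by omega), rootPair_append_of_lt _ _ hj,
      rootPair_append_of_lt _ _ hj]
  · obtain ⟨j, rfl⟩ := Nat.exists_eq_add_of_le hj
    have : Equiv.swap (A.length + x) (A.length + y) (A.length + j)
        = A.length + Equiv.swap x y j := by
      simp only [Equiv.swap_apply_def]
      split_ifs <;> omega
    rw [this, rootPair_append_add, rootPair_append_add, h]

lemma exists_of_moveOKA_two {w : List ℕ} {k : ℕ} (h : moveOKA w (.two k)) :
    ∃ A a b D, w = A ++ a :: b :: D ∧ k = A.length ∧ (a + 2 ≤ b ∨ b + 2 ≤ a) := by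
  obtain ⟨hk, hab⟩ := h
  match hD : w.drop k with
  | a :: b :: D =>
    have hw : w = w.take k ++ a :: b :: D := by rw [← hD, List.take_append_drop]
    have hA : (w.take k).length = k := by simp; omega
    refine ⟨w.take k, a, b, D, hw, hA.symm, ?_⟩
    rw [hw] at hab
    simpa [List.getD_eq_getElem?_getD, List.getElem?_append_right, hA] using hab
  | [] | [_] => have := congrArg List.length hD; simp at this; omega

lemma exists_of_moveOKA_three {w : List ℕ} {k : ℕ} (h : moveOKA w (.three k)) :
    ∃ A a b D, w = A ++ a :: b :: a :: D ∧ k = A.length ∧ (a + 1 = b ∨ b + 1 = a) := by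
  obtain ⟨hk, hca, hab⟩ := h
  match hD : w.drop k with
  | a :: b :: c :: D =>
    have hw : w = w.take k ++ a :: b :: c :: D := by rw [← hD, List.take_append_drop]
    have hA : (w.take k).length = k := by simp; omega
    rw [hw] at hca hab
    simp [List.getD_eq_getElem?_getD, hA] at hca hab
    subst hca
    exact ⟨w.take k, c, b, D, hw, hA.symm, hab⟩
  | [] | [_] | [_, _] => have := congrArg List.length hD; simp at this; omega

lemma moveWord_two_append (A D : List ℕ) (a b : ℕ) :
    moveWord (A ++ a :: b :: D) (.two A.length) = A ++ b :: a :: D := by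
  simp [moveWord]

lemma moveWord_three_append (A D : List ℕ) (a b : ℕ) :
    moveWord (A ++ a :: b :: a :: D) (.three A.length) = A ++ b :: a :: b :: D := by
  simp [moveWord]

def BraidMove.indexSwap : BraidMove → Equiv.Perm ℕ
  | .two k => Equiv.swap k (k + 1)
  | .three k => Equiv.swap k (k + 2)

lemma rootPair_moveWord {w : List ℕ} {m : BraidMove} (h : moveOKA w m) (j : ℕ) :
    rootPair (moveWord w m) j = rootPair w (m.indexSwap j) := by
  cases m with
  | two k =>
    obtain ⟨A, a, b, D, rfl, rfl, hab⟩ := exists_of_moveOKA_two h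
    rw [moveWord_two_append]
    refine rootPair_append_swap (x := 0) (y := 1) (fun j => ?_) j
    match j with
    | 0 => simp [rootPair_cons_succ, rootPair_zero, sA_apply_of_ne, show b ≠ a by omega,
        show b ≠ a + 1 by omega, show b + 1 ≠ a by omega]
    | 1 => simp [rootPair_cons_succ, rootPair_zero, sA_apply_of_ne, show a ≠ b by omega,
        show a ≠ b + 1 by omega, show a + 1 ≠ b by omega]
    | j + 2 =>
      rw [Equiv.swap_apply_of_ne_of_ne (by omega) (by omega)]
      simp only [rootPair_cons_succ, Prod.map_map, ← Equiv.Perm.coe_mul, sA_mul_comm hab]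
  | three k =>
    obtain ⟨A, a, b, D, rfl, rfl, hab⟩ := exists_of_moveOKA_three h
    rw [moveWord_three_append]
    refine rootPair_append_swap (x := 0) (y := 2) (fun j => ?_) j
    match j with
    | 0 | 1 | 2 =>
      rcases hab with rfl | rfl <;>
        simp [rootPair_cons_succ, rootPair_zero, sA, Equiv.swap_apply_def] <;>
        (try split_ifs) <;> omega
    | j + 3 =>
      rw [Equiv.swap_apply_of_ne_of_ne (by omega) (by omega)]
      simp only [rootPair_cons_succ, Prod.map_map, ← Equiv.Perm.coe_mul, ← mul_assoc,
        sA_braid hab]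

lemma wordProdA_moveWord {w : List ℕ} {m : BraidMove} (h : moveOKA w m) :
    wordProdA (moveWord w m) = wordProdA w := by
  cases m with
  | two k =>
    obtain ⟨A, a, b, D, rfl, rfl, hab⟩ := exists_of_moveOKA_two h
    simp only [moveWord_two_append, wordProdA_append, wordProdA_cons, ← mul_assoc,
      sA_mul_comm hab]
  | three k =>
    obtain ⟨A, a, b, D, rfl, rfl, hab⟩ := exists_of_moveOKA_three h
    simp only [moveWord_three_append, wordProdA_append, wordProdA_cons, ← mul_assoc,
      sA_braid hab]

lemma length_moveWord (w : List ℕ) (m : BraidMove) : (moveWord w m).length = w.length := by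
  cases m <;> simp [moveWord]

lemma isReducedWordA.moveWord {n : ℕ} {w : List ℕ} {m : BraidMove} (hw : isReducedWordA n w)
    (h : moveOKA w m) : isReducedWordA n (moveWord w m) := by
  refine ⟨fun x hx => hw.1 x ?_, ?_, (wordProdA_moveWord h).trans hw.2.2⟩
  · cases m with
    | two k =>
      obtain ⟨A, a, b, D, rfl, rfl, -⟩ := exists_of_moveOKA_two h
      simp only [moveWord_two_append, List.mem_append, List.mem_cons] at hx ⊢
      tauto
    | three k =>
      obtain ⟨A, a, b, D, rfl, rfl, -⟩ := exists_of_moveOKA_three h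
      simp only [moveWord_three_append, List.mem_append, List.mem_cons] at hx ⊢
      tauto
  · rw [length_moveWord, hw.2.1]

def PairsDisjoint (p q : ℕ × ℕ) : Prop := p.1 ≠ q.1 ∧ p.1 ≠ q.2 ∧ p.2 ≠ q.1 ∧ p.2 ≠ q.2

lemma PairsDisjoint.symm {p q : ℕ × ℕ} (h : PairsDisjoint p q) : PairsDisjoint q p :=
  ⟨h.1.symm, h.2.2.1.symm, h.2.1.symm, h.2.2.2.symm⟩

lemma pairsDisjoint_rootPair_of_moveOKA_two {w : List ℕ} {k : ℕ} (h : moveOKA w (.two k)) :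
    PairsDisjoint (rootPair w k) (rootPair w (k + 1)) := by
  obtain ⟨A, a, b, D, rfl, rfl, hab⟩ := exists_of_moveOKA_two h
  rw [← add_zero A.length, rootPair_append_add, add_assoc, rootPair_append_add, zero_add,
    rootPair_cons_succ, rootPair_zero, rootPair_zero]
  simp only [List.getD_cons_zero, Prod.map_apply,
    sA_apply_of_ne (show b ≠ a by omega) (show b ≠ a + 1 by omega),
    sA_apply_of_ne (show b + 1 ≠ a by omega) (show b + 1 ≠ a + 1 by omega)]
  refine ⟨?_, ?_, ?_, ?_⟩ <;> exact (Equiv.injective _).ne (by omega)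

lemma ipA_alphaA {n i : ℕ} (hi : i ≤ n) (v : ℕ → ℤ) : ipA n (alphaA i) v = v i - v (i + 1) := by
  simp only [ipA, alphaA, stdE, Pi.sub_apply, sub_mul, ite_mul, one_mul, zero_mul,
    Finset.sum_sub_distrib, Finset.sum_ite_eq', Finset.mem_range]
  rw [if_pos (by omega), if_pos (by omega)]

lemma ipA_alphaA_pairRoot_neg_iff {n i : ℕ} (hi : i ≤ n) {p : ℕ × ℕ} (hp : p.1 < p.2) :
    ipA n (alphaA i) (pairRoot p) < 0 ↔ p.2 = i ∨ p.1 = i + 1 := by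
  rw [ipA_alphaA hi, pairRoot_apply, pairRoot_apply]
  split_ifs <;> omega

lemma not_ipA_alphaA_pairRoot_neg {n i : ℕ} (hi : i ≤ n) {p : ℕ × ℕ} (hp : p.1 < p.2)
    (hd : PairsDisjoint p (i, i + 1)) : ¬ipA n (alphaA i) (pairRoot p) < 0 := by
  rw [ipA_alphaA_pairRoot_neg_iff hi hp]
  obtain ⟨-, h₁, h₂, -⟩ := hd
  omega

lemma pairRoot_add_alphaA {i : ℕ} {p q : ℕ × ℕ} (hp : p.1 < p.2) (hq : q.1 < q.2)
    (h : pairRoot p + alphaA i = pairRoot q) :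
    (p.2 = i ∧ q = (p.1, i + 1)) ∨ (p.1 = i + 1 ∧ q = (i, p.2)) := by
  have h_at : ∀ j, pairRoot p j + pairRoot (i, i + 1) j = pairRoot q j := congrFun h
  have hi := h_at i
  have hi' := h_at (i + 1)
  simp only [pairRoot_apply] at hi hi'
  have hcases : (p.2 = i ∧ q.2 = i + 1) ∨ (p.1 = i + 1 ∧ q.1 = i) ∨
      (q = (i, i + 1) ∧ p.1 ≠ i ∧ p.1 ≠ i + 1) := by
    rw [Prod.ext_iff]
    split_ifs at hi hi' <;> omega
  rcases hcases with ⟨hp₂, hq₂⟩ | ⟨hp₁, hq₁⟩ | ⟨rfl, hp₁, hp₁'⟩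
  · have := h_at p.1
    simp only [pairRoot_apply] at this
    left
    rw [Prod.ext_iff]
    split_ifs at this <;> omega
  · have := h_at p.2
    simp only [pairRoot_apply] at this
    right
    rw [Prod.ext_iff]
    split_ifs at this <;> omega
  · have := h_at p.1
    simp only [pairRoot_apply] at this
    split_ifs at this <;> omega

lemma etaListA_eq {n i T : ℕ} {w : List ℕ} (hw : isReducedWordA n w) (hT : T < w.length)
    (hTα : rootPair w T = (i, i + 1)) :
    etaListA n i w = ((List.range T).map (pairRoot ∘ rootPair w)).filter
      fun η => decide (ipA n (alphaA i) η < 0) := by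
  obtain ⟨rest, hsplit⟩ : ∃ rest, List.range w.length = List.range T ++ T :: rest := by
    obtain ⟨r, hr⟩ := Nat.exists_eq_add_of_lt hT
    rw [hr, add_assoc, List.range_add, List.range_succ_eq_map, List.map_cons, add_zero]
    exact ⟨_, rfl⟩
  rw [etaListA, rootSeqA_eq_map, hsplit, List.map_append, List.takeWhile_append_of_pos]
  · simp [hTα, alphaA_eq_pairRoot]
  · simp only [List.mem_map, List.mem_range, Function.comp_apply, ne_eq, decide_eq_true_eq,
      forall_exists_index, and_imp]
    rintro _ j hj rfl hjα
    rw [alphaA_eq_pairRoot, ← hTα, pairRoot_eq_iff (rootPair_fst_lt_snd hw (by omega)).ne] at hjα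
    exact absurd (rootPair_injOn hw (show j < w.length by omega) hT hjα) (by omega)

lemma rootPair_of_semiCondA_three {n i c : ℕ} {w : List ℕ} (hw : isReducedWordA n w)
    (h : moveOKA w (.three c)) (hs : semiCondA i w (.three c)) :
    rootPair w (c + 2) = (i, i + 1) ∧
      ((rootPair w c).2 = i ∧ rootPair w (c + 1) = ((rootPair w c).1, i + 1) ∨
        (rootPair w c).1 = i + 1 ∧ rootPair w (c + 1) = (i, (rootPair w c).2)) := by
  obtain ⟨hc, -⟩ := h
  obtain ⟨hs₁, hs₂⟩ := hs
  rw [rootSeqA_getD hc, alphaA_eq_pairRoot,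
    pairRoot_eq_iff (rootPair_fst_lt_snd hw hc).ne] at hs₂
  rw [rootSeqA_getD (by omega), rootSeqA_getD (by omega)] at hs₁
  exact ⟨hs₂, pairRoot_add_alphaA (rootPair_fst_lt_snd hw (by omega))
    (rootPair_fst_lt_snd hw (by omega)) hs₁.symm⟩

lemma etaListA_moveWord_three {n i c : ℕ} {w : List ℕ} (hw : isReducedWordA n w) (hi : i ≤ n)
    (h : moveOKA w (.three c)) (hs : semiCondA i w (.three c)) :
    etaListA n i w = etaListA n i (moveWord w (.three c)) ++ [pairRoot (rootPair w c)] := by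
  have hc : c + 2 < w.length := h.1
  obtain ⟨hT, hβ⟩ := rootPair_of_semiCondA_three hw h hs
  have hmove := rootPair_moveWord h
  simp only [BraidMove.indexSwap] at hmove
  have hT' : rootPair (moveWord w (.three c)) c = (i, i + 1) := by
    rw [hmove, Equiv.swap_apply_left, hT]
  have hβ₀ := rootPair_fst_lt_snd hw (show c < w.length by omega)
  have hβ₁ := rootPair_fst_lt_snd hw (show c + 1 < w.length by omega)
  have hηβ : ipA n (alphaA i) (pairRoot (rootPair w c)) < 0 := by
    rw [ipA_alphaA_pairRoot_neg_iff hi hβ₀]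
    exact hβ.imp And.left And.left
  have hνβ : ¬ ipA n (alphaA i) (pairRoot (rootPair w (c + 1))) < 0 := by
    rw [ipA_alphaA_pairRoot_neg_iff hi hβ₁]
    rcases hβ with ⟨hβ, hν⟩ | ⟨hβ, hν⟩ <;> simp only [hν] <;> omega
  rw [etaListA_eq hw (by omega) hT,
    etaListA_eq (hw.moveWord h) (by rw [length_moveWord]; omega) hT', List.range_succ,
    List.range_succ]
  have hprefix : (List.range c).map (pairRoot ∘ rootPair (moveWord w (.three c))) =
      (List.range c).map (pairRoot ∘ rootPair w) := by
    refine List.map_congr_left fun j hj => ?_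
    rw [List.mem_range] at hj
    rw [Function.comp_apply, hmove, Equiv.swap_apply_of_ne_of_ne (by omega) (by omega)]
    rfl
  simp [hprefix, hηβ, hνβ]

/-- Passing `α_i` over `e_a - e_i` would need a 3-term move at `(e_a - e_i, e_a - e_(i+1), α_i)`,
which the root `e_a - e_b` between them forbids. -/
def BlockedA (i : ℕ) (w : List ℕ) : Prop :=
  ∃ a b p q r t, a < i ∧ i + 1 < b ∧ p < q ∧ q < r ∧ p < t ∧ r < w.length ∧ t < w.length ∧
    rootPair w p = (a, i) ∧ rootPair w q = (a, b) ∧ rootPair w r = (a, i + 1) ∧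
    rootPair w t = (i, i + 1)

lemma BlockedA.getD_zero_ne {n i : ℕ} {w : List ℕ} (hw : isReducedWordA n w)
    (hB : BlockedA i w) : w.getD 0 0 ≠ i := by
  obtain ⟨a, b, p, q, r, t, -, -, -, -, hpt, -, ht, -, -, -, htα⟩ := hB
  intro h0
  have h0α : rootPair w 0 = (i, i + 1) := by rw [rootPair_zero, h0]
  have := rootPair_injOn hw (show 0 < w.length by omega) ht (h0α.trans htα.symm)
  omega

lemma swap_lt_swap_of_not_adjacent {c j₁ j₂ : ℕ} (h : j₁ < j₂) (hne : ¬(j₁ = c ∧ j₂ = c + 1)) :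
    Equiv.swap c (c + 1) j₁ < Equiv.swap c (c + 1) j₂ := by
  simp only [Equiv.swap_apply_def]
  split_ifs <;> omega

lemma swap_apply_lt {c j L : ℕ} (hj : j < L) (hc : c + 1 < L) : Equiv.swap c (c + 1) j < L := by
  simp only [Equiv.swap_apply_def]
  split_ifs <;> omega

lemma BlockedA.moveWord_two {i c : ℕ} {w : List ℕ} (hB : BlockedA i w)
    (h : moveOKA w (.two c)) : BlockedA i (moveWord w (.two c)) := by
  obtain ⟨a, b, p, q, r, t, hai, hib, hpq, hqr, hpt, hr, ht, hp, hq, hr', htα⟩ := hB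
  have hc : c + 1 < w.length := h.1
  set s := Equiv.swap c (c + 1)
  have hmove (j : ℕ) : rootPair (moveWord w (.two c)) (s j) = rootPair w j := by
    rw [rootPair_moveWord h, BraidMove.indexSwap, Equiv.swap_apply_self]
  have hlt {j₁ j₂ : ℕ} (hj : j₁ < j₂) (hshare : ¬PairsDisjoint (rootPair w j₁) (rootPair w j₂)) :
      s j₁ < s j₂ :=
    swap_lt_swap_of_not_adjacent hj fun ⟨h₁, h₂⟩ =>
      hshare (h₁ ▸ h₂ ▸ pairsDisjoint_rootPair_of_moveOKA_two h)
  have hlen {j : ℕ} (hj : j < w.length) : s j < (moveWord w (.two c)).length := by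
    rw [length_moveWord]; exact swap_apply_lt hj hc
  refine ⟨a, b, s p, s q, s r, s t, hai, hib, hlt hpq ?_, hlt hqr ?_, hlt hpt ?_, hlen hr,
    hlen ht, by rw [hmove, hp], by rw [hmove, hq], by rw [hmove, hr'], by rw [hmove, htα]⟩ <;>
  simp [PairsDisjoint, hp, hq, hr', htα]

lemma BlockedA.moveWord_three {n i c : ℕ} {w : List ℕ} (hw : isReducedWordA n w)
    (hB : BlockedA i w) (h : moveOKA w (.three c)) (hs : semiCondA i w (.three c)) :
    BlockedA i (moveWord w (.three c)) := by
  obtain ⟨a, b, p, q, r, t, hai, hib, hpq, hqr, hpt, hr, ht, hp, hq, hr', htα⟩ := hB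
  have hc : c + 2 < w.length := h.1
  obtain ⟨hT, hβ⟩ := rootPair_of_semiCondA_three hw h hs
  have hinj := rootPair_injOn hw
  have htc : t = c + 2 := hinj ht hc (htα.trans hT.symm)
  subst htc
  have hne₂ {j : ℕ} {x y : ℕ} (hj : j < w.length) (hjx : rootPair w j = (x, y)) (hx : x < i) :
      j ≠ c + 2 := by
    rintro rfl; rw [hT, Prod.mk.injEq] at hjx; omega
  -- otherwise `β + α_i = e_a - e_(i+1)` would directly follow `e_a - e_i`, leaving no room
  -- for `e_a - e_b`
  have hpc : p ≠ c := by
    rintro rfl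
    rcases hβ with ⟨-, hν⟩ | ⟨hβ₁, -⟩
    · have := hinj hr (show p + 1 < w.length by omega) (hr'.trans (by rw [hν, hp]))
      omega
    · simp only [hp] at hβ₁; omega
  have hpc₁ : p ≠ c + 1 := by
    rintro rfl
    rcases hβ with ⟨-, hν⟩ | ⟨-, hν⟩ <;> rw [hp, Prod.mk.injEq] at hν <;> omega
  have hqc : q ≠ c := by
    rintro rfl
    rcases hβ with ⟨hβ, -⟩ | ⟨hβ, -⟩ <;> simp only [hq] at hβ <;> omega
  have hrc : r ≠ c := by
    rintro rfl
    rcases hβ with ⟨hβ, -⟩ | ⟨hβ, -⟩ <;> simp only [hr'] at hβ <;> omega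
  have hmove {j : ℕ} (hj : j ≠ c) (hj₂ : j ≠ c + 2) :
      rootPair (moveWord w (.three c)) j = rootPair w j := by
    rw [rootPair_moveWord h, BraidMove.indexSwap, Equiv.swap_apply_of_ne_of_ne hj hj₂]
  refine ⟨a, b, p, q, r, c, hai, hib, hpq, hqr, by omega, by rw [length_moveWord]; exact hr,
    by rw [length_moveWord]; omega, ?_, ?_, ?_, ?_⟩
  · rw [hmove hpc (hne₂ (by omega) hp hai), hp]
  · rw [hmove hqc (hne₂ (by omega) hq hai), hq]
  · rw [hmove hrc (hne₂ hr hr' hai), hr']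
  · rw [rootPair_moveWord h, BraidMove.indexSwap, Equiv.swap_apply_left, hT]

lemma BlockedA.moveWord {n i : ℕ} {w : List ℕ} {m : BraidMove} (hw : isReducedWordA n w)
    (hB : BlockedA i w) (h : moveOKA w m) (hs : semiCondA i w m) :
    BlockedA i (moveWord w m) := by
  cases m
  exacts [hB.moveWord_two h, hB.moveWord_three hw h hs]

lemma BlockedA.getD_zero_applyMovesWord_ne {n i : ℕ} {w : List ℕ} {σ : List BraidMove}
    (hw : isReducedWordA n w) (hB : BlockedA i w) (hσ : validSeqA i w σ) :
    (applyMovesWord w σ).getD 0 0 ≠ i := by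
  induction σ generalizing w with
  | nil => exact hB.getD_zero_ne hw
  | cons m σ ih =>
    obtain ⟨h, hs, hσ⟩ := hσ
    exact ih (hw.moveWord h) (hB.moveWord hw h hs) hσ

/-- In the reflection order `e_a - e_(i+1)` comes between `e_a - e_i` and `α_i`, and `e_a - e_b`
between `e_(i+1) - e_b` and `e_a - e_(i+1)`. -/
lemma blockedA_of_adjacent {n i a b p p' T : ℕ} {w : List ℕ} (hw : isReducedWordA n w)
    (hp : rootPair w p = (a, i)) (hp' : rootPair w p' = (i + 1, b))
    (hadj : p' = p + 1 ∨ p = p' + 1)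
    (hpT : p < T) (hp'T : p' < T) (hT : T < w.length) (hTα : rootPair w T = (i, i + 1)) :
    BlockedA i w := by
  have hpL := rootPair_mem_posPairs hw (show p < w.length by omega)
  have hpR := rootPair_mem_posPairs hw (show p' < w.length by omega)
  rw [hp, mem_posPairs] at hpL
  rw [hp', mem_posPairs] at hpR
  obtain ⟨r, hr, hr'⟩ := exists_rootPair_eq hw (p := (a, i + 1)) (mem_posPairs.2 (by dsimp; omega))
  obtain ⟨q, hq, hq'⟩ := exists_rootPair_eq hw (p := (a, b)) (mem_posPairs.2 (by dsimp; omega))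
  have hr_between := rootPair_between hw (by omega) hT hr hp hTα hr'
  have hq_between := rootPair_between hw hr (by omega) hq hr' hp' hq'
  have hqp : q ≠ p := fun h => by rw [h, hp, Prod.mk.injEq] at hq'; omega
  have hrp' : r ≠ p' := fun h => by rw [h, hp', Prod.mk.injEq] at hr'; omega
  exact ⟨a, b, p, q, r, T, by omega, by omega, by omega, by omega, hpT, hr, hT, hp, hq', hr',
    hTα⟩

lemma filter_map_range_swap {α : Type*} (g : ℕ → α) (P : α → Bool) {c T : ℕ}
    (hboth : c + 1 < T → ¬(P (g c) ∧ P (g (c + 1))))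
    (hc : T = c → P (g (c + 1)) = false) (hc₁ : T = c + 1 → P (g c) = false) :
    ((List.range (Equiv.swap c (c + 1) T)).map (g ∘ Equiv.swap c (c + 1))).filter P =
      ((List.range T).map g).filter P := by
  set s := Equiv.swap c (c + 1)
  have hlow {m : ℕ} (hm : m ≤ c) : (List.range m).map (g ∘ s) = (List.range m).map g :=
    List.map_congr_left fun j hj => by
      rw [List.mem_range] at hj
      rw [Function.comp_apply, Equiv.swap_apply_of_ne_of_ne (by omega) (by omega)]
  rcases lt_trichotomy T c with hT | rfl | hT
  · rw [Equiv.swap_apply_of_ne_of_ne (by omega) (by omega), hlow hT.le]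
  · simp [s, List.range_succ, hlow le_rfl, hc rfl]
  rcases Nat.lt_or_ge T (c + 2) with hT' | hT'
  · obtain rfl : T = c + 1 := by omega
    simp [s, List.range_succ, hlow le_rfl, hc₁ rfl]
  rw [Equiv.swap_apply_of_ne_of_ne (by omega) (by omega)]
  induction T, hT' using Nat.le_induction with
  | base =>
    have := hboth (by omega)
    simp only [List.range_succ, List.map_append, List.filter_append, hlow le_rfl,
      List.map_cons, List.map_nil, Function.comp_apply, s, Equiv.swap_apply_left,
      Equiv.swap_apply_right, List.append_assoc]
    congr 1
    cases h₁ : P (g c) <;> cases h₂ : P (g (c + 1)) <;> simp_all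
  | succ T hT ih =>
    rw [List.range_succ, List.map_append, List.map_append, List.filter_append, List.filter_append,
      ih (fun _ => hboth (by omega)) (by omega) (by omega) (by omega)]
    simp [s, Equiv.swap_apply_of_ne_of_ne (show T ≠ c by omega) (show T ≠ c + 1 by omega)]

lemma etaListA_moveWord_two {n i c : ℕ} {w : List ℕ} (hw : isReducedWordA n w) (hi₁ : 1 ≤ i)
    (hi : i ≤ n) (h : moveOKA w (.two c)) (hB : ¬BlockedA i w) :
    etaListA n i (moveWord w (.two c)) = etaListA n i w := by
  obtain ⟨T, hT, hTα⟩ := exists_rootPair_eq hw (p := (i, i + 1)) (mem_posPairs.2 (by dsimp; omega))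
  have hc : c + 1 < w.length := h.1
  have hmove : rootPair (moveWord w (.two c)) = rootPair w ∘ Equiv.swap c (c + 1) :=
    funext (rootPair_moveWord h)
  have hT' : rootPair (moveWord w (.two c)) (Equiv.swap c (c + 1) T) = (i, i + 1) := by
    rw [hmove, Function.comp_apply, Equiv.swap_apply_self, hTα]
  have hlt₀ := rootPair_fst_lt_snd hw (show c < w.length by omega)
  have hlt₁ := rootPair_fst_lt_snd hw hc
  have hdisj := pairsDisjoint_rootPair_of_moveOKA_two h
  have hT'len : Equiv.swap c (c + 1) T < (moveWord w (.two c)).length := by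
    rw [length_moveWord]; exact swap_apply_lt hT hc
  rw [etaListA_eq (hw.moveWord h) hT'len hT', etaListA_eq hw hT hTα, hmove,
    ← Function.comp_assoc]
  refine filter_map_range_swap _ _ (fun hcT hboth => hB ?_) (fun hTc => ?_) (fun hTc => ?_)
  · simp only [Function.comp_apply, decide_eq_true_eq, ipA_alphaA_pairRoot_neg_iff hi hlt₀,
      ipA_alphaA_pairRoot_neg_iff hi hlt₁] at hboth
    obtain ⟨h₁, h₂, h₃, h₄⟩ := hdisj
    rcases hboth with ⟨h₀ | h₀, h₁' | h₁'⟩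
    · omega
    · exact blockedA_of_adjacent hw (Prod.ext rfl h₀) (Prod.ext h₁' rfl) (Or.inl rfl) (by omega)
        hcT hT hTα
    · exact blockedA_of_adjacent hw (Prod.ext rfl h₁') (Prod.ext h₀ rfl) (Or.inr rfl) hcT
        (by omega) hT hTα
    · omega
  · subst hTc
    rw [hTα] at hdisj
    simpa using not_ipA_alphaA_pairRoot_neg hi hlt₁ hdisj.symm
  · subst hTc
    rw [hTα] at hdisj
    simpa using not_ipA_alphaA_pairRoot_neg hi hlt₀ hdisj

theorem statement9_general (n i : ℕ) (hi1 : 1 ≤ i) (hi2 : i ≤ n)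
    (w : List ℕ) (hw : isReducedWordA n w)
    (σ : List BraidMove) (hσ : validSeqA i w σ)
    (hfirst : (applyMovesWord w σ).getD 0 0 = i) :
    threeTriplesA w σ =
      ((etaListA n i w).reverse).map (fun η => (η, η + alphaA i, alphaA i)) := by
  induction σ generalizing w with
  | nil =>
    have hw0 : 0 < w.length := by
      rcases w with _ | _
      · simp [applyMovesWord] at hfirst; omega
      · simp
    rw [etaListA_eq hw hw0 (by rw [rootPair_zero, ← hfirst]; rfl)]
    rfl
  | cons m σ ih =>
    have ⟨h, hs, hσ'⟩ := hσ
    have IH := ih (moveWord w m) (hw.moveWord h) hσ' hfirst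
    cases m with
    | two c =>
      rw [threeTriplesA, IH, etaListA_moveWord_two hw hi1 hi2 h
        fun hB => hB.getD_zero_applyMovesWord_ne hw hσ hfirst]
    | three c =>
      rw [threeTriplesA, IH, etaListA_moveWord_three hw hi2 h hs, hs.1, hs.2,
        rootSeqA_getD (show c < w.length by have := h.1; omega)]
      simp

/-- In any sequence of braid moves allowed by `i`-semi-adaptedness, taking a
reduced word `w` for `w₀` to a word whose first letter is `i`, there are exactly `k` 3-term
braid moves (`k` = number of `η`'s), and they occur at the root triples
`(η_k, ν_k, α_i)`, then `(η_(k-1), ν_(k-1), α_i)`, …, then `(η_1, ν_1, α_i)`. -/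
theorem statement9 (n i : ℕ) (hn : 1 ≤ n) (hi1 : 1 ≤ i) (hi2 : i ≤ n)
    (w : List ℕ) (hw : isReducedWordA n w)
    (σ : List BraidMove) (hσ : validSeqA i w σ)
    (hfirst : (applyMovesWord w σ).getD 0 0 = i) :
    threeTriplesA w σ =
      ((etaListA n i w).reverse).map (fun η => (η, η + alphaA i, alphaA i)) :=
  statement9_general n i hi1 hi2 w hw σ hσ hfirst

end
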